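/- arXiv:1911.04302 — 6 statements merged into one kernel-verified Lean document; each statement's English description precedes it below -/
import Mathlib

section
/- Let Φ : X → ℝ^d be a proper continuous map from a topological space X, and suppose a subset S ⊆ X is called 'displaceable' if there is an open set U ⊇ S and a homeomorphism φ of X with φ(U) ∩ U = ∅. If (u_i) is a sequence in ℝ^d converging to u_∞ such that each fiber Φ⁻¹(u_i) is non-displaceable, then Φ⁻¹(u_∞) is non-displaceable. -/
/-- A subset `S` of a topological space `X` is displaceable if there is an open set `U ⊇ S`
and a homeomorphism `φ` of `X` with `φ(U) ∩ U = ∅`. -/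
def Displaceable {X : Type*} [TopologicalSpace X] (S : Set X) : Prop :=
  ∃ U : Set X, IsOpen U ∧ S ⊆ U ∧ ∃ φ : X ≃ₜ X, Disjoint (φ '' U) U

/-- If `Φ : X → ℝ^d` is continuous and proper, and `(u i)` is a sequence converging to `uLim`
with every fiber `Φ⁻¹(u i)` non-displaceable, then `Φ⁻¹(uLim)` is non-displaceable. -/
theorem nondisplaceable_fiber_of_limit {X : Type*} [TopologicalSpace X] {d : ℕ}
    (Φ : X → (Fin d → ℝ)) (hcont : Continuous Φ)
    (hproper : ∀ K : Set (Fin d → ℝ), IsCompact K → IsCompact (Φ ⁻¹' K))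
    (u : ℕ → Fin d → ℝ) (uLim : Fin d → ℝ)
    (hconv : Filter.Tendsto u Filter.atTop (nhds uLim))
    (hnd : ∀ i, ¬ Displaceable (Φ ⁻¹' {u i})) :
    ¬ Displaceable (Φ ⁻¹' {uLim}) := by
  rintro ⟨U, hUopen, hUsub, φ, hdisj⟩
  -- compact set
  set K : Set (Fin d → ℝ) := Metric.closedBall uLim 1 with hK
  have hKcomp : IsCompact K := isCompact_closedBall _ _
  have hCcomp : IsCompact (Φ ⁻¹' K \ U) :=
    (hproper K hKcomp).diff hUopen
  have hCim : IsCompact (Φ '' (Φ ⁻¹' K \ U)) := hCcomp.image hcont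
  have hCclosed : IsClosed (Φ '' (Φ ⁻¹' K \ U)) := hCim.isClosed
  have huLim : uLim ∉ Φ '' (Φ ⁻¹' K \ U) := by
    rintro ⟨x, ⟨hxK, hxU⟩, hx⟩
    exact hxU (hUsub hx)
  -- open neighborhood of uLim
  have hnbhd : (Φ '' (Φ ⁻¹' K \ U))ᶜ ∩ Metric.ball uLim 1 ∈ nhds uLim := by
    apply Filter.inter_mem
    · exact hCclosed.isOpen_compl.mem_nhds huLim
    · exact Metric.ball_mem_nhds _ one_pos
  obtain ⟨i, hi⟩ := (hconv.eventually hnbhd).exists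
  apply hnd i
  refine ⟨U, hUopen, ?_, φ, hdisj⟩
  intro x hx
  simp only [Set.mem_preimage, Set.mem_singleton_iff] at hx
  by_contra hxU
  apply hi.1
  exact ⟨x, ⟨by simp [hK, hx, Metric.ball_subset_closedBall hi.2], hxU⟩, hx⟩
end

section
/- Define complex numbers y_{i,j} for 1 ≤ i,j by: y_{i,j} = 1 if i = j; y_{i,j} = ∏_{r=0}^{j-i-1} (2i + 2r) if i < j; y_{i,j} = ∏_{r=0}^{i-j-1} (2j + 2r)^{-1} if i > j. Then for all pairs (i,j) with i,j ≥ 1 and i + j ≤ m (where we set y_{0,j} = 0 and y_{i,0} = ∞ interpreted as: the term y_{i,j}/y_{i,0} is 0 and the term y_{0,j}/y_{1,j} is 0), the equation −y_{i,j+1}/y_{i,j} − y_{i−1,j}/y_{i,j} + y_{i,j}/y_{i+1,j} + y_{i,j}/y_{i,j−1} = 0 holds. -/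
open Finset

/-- The explicit candidate solution: `y_{i,j} = 1` for `i = j`,
`y_{i,j} = ∏_{r=0}^{j-i-1} (2i+2r)` for `i < j`, `y_{i,j} = ∏_{r=0}^{i-j-1} (2j+2r)⁻¹` for
`i > j`.  Indices `0` are sent to `0`, which via Lean's `0⁻¹ = 0` convention implements the
boundary conventions `y_{0,j} := 0` (numerator terms vanish) and `y_{i,0} := ∞`
(terms with `y_{i,0}` in the denominator vanish, since division by `0` is `0`). -/
noncomputable def Ysol : ℕ → ℕ → ℂ := fun i j =>
  if i = 0 ∨ j = 0 then 0
  else if i = j then 1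
  else if i < j then ∏ r ∈ Finset.range (j - i), ((2 * i + 2 * r : ℕ) : ℂ)
  else (∏ r ∈ Finset.range (i - j), ((2 * j + 2 * r : ℕ) : ℂ))⁻¹

lemma Ysol_lt {i j : ℕ} (hi : i ≠ 0) (h : i < j) :
    Ysol i j = ∏ r ∈ Finset.range (j - i), ((2 * i + 2 * r : ℕ) : ℂ) := by
  unfold Ysol
  rw [if_neg (by push_neg; exact ⟨hi, by omega⟩), if_neg h.ne, if_pos h]

lemma Ysol_diag {i : ℕ} (hi : i ≠ 0) : Ysol i i = 1 := by
  unfold Ysol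
  rw [if_neg (by push_neg; exact ⟨hi, hi⟩), if_pos rfl]

lemma Ysol_gt {i j : ℕ} (hj : j ≠ 0) (h : j < i) :
    Ysol i j = (∏ r ∈ Finset.range (i - j), ((2 * j + 2 * r : ℕ) : ℂ))⁻¹ := by
  unfold Ysol
  rw [if_neg (by push_neg; exact ⟨by omega, hj⟩), if_neg (by omega), if_neg (by omega)]

lemma Yprod_ne (i n : ℕ) (hi : i ≠ 0) :
    (∏ r ∈ Finset.range n, ((2 * i + 2 * r : ℕ) : ℂ)) ≠ 0 := by
  rw [Finset.prod_ne_zero_iff]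
  intro r _
  exact Nat.cast_ne_zero.2 (by omega)

lemma Ysol_ne (i j : ℕ) (hi : i ≠ 0) (hj : j ≠ 0) : Ysol i j ≠ 0 := by
  rcases lt_trichotomy i j with h | h | h
  · rw [Ysol_lt hi h]; exact Yprod_ne i _ hi
  · rw [h, Ysol_diag hj]; exact one_ne_zero
  · rw [Ysol_gt hj h]; exact inv_ne_zero (Yprod_ne j _ hj)

lemma Ysol_step_j (i j : ℕ) (hi : i ≠ 0) (hj : j ≠ 0) :
    Ysol i (j + 1) = ((2 * j : ℕ) : ℂ) * Ysol i j := by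
  have h2j : ((2 * j : ℕ) : ℂ) ≠ 0 := Nat.cast_ne_zero.2 (by omega)
  rcases lt_trichotomy i j with h | h | h
  · rw [Ysol_lt hi (by omega), Ysol_lt hi h, (by omega : j + 1 - i = (j - i) + 1),
      Finset.prod_range_succ, (by omega : 2 * i + 2 * (j - i) = 2 * j), mul_comm]
  · subst h
    rw [Ysol_lt hi (by omega), Ysol_diag hi, (by omega : i + 1 - i = 1),
      Finset.prod_range_one, mul_one]
    norm_num
  · rcases eq_or_lt_of_le (Nat.succ_le_of_lt h) with h' | h'
    · -- i = j + 1
      rw [← h', Ysol_diag (by omega), Ysol_gt hj (by omega),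
        (by omega : j + 1 - j = 1), Finset.prod_range_one,
        (by omega : 2 * j + 2 * 0 = 2 * j), mul_inv_cancel₀ h2j]
    · -- i > j + 1
      rw [Ysol_gt (by omega : j + 1 ≠ 0) h', Ysol_gt hj h,
        (by omega : i - j = (i - (j + 1)) + 1), Finset.prod_range_succ']
      have e3 : ∀ r, ((2 * j + 2 * (r + 1) : ℕ) : ℂ) = ((2 * (j + 1) + 2 * r : ℕ) : ℂ) := by
        intro r; congr 1; omega
      simp only [e3, Nat.add_zero, Nat.mul_zero]
      rw [mul_inv, mul_comm ((2 * j : ℕ) : ℂ), mul_assoc, inv_mul_cancel₀ h2j, mul_one]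

lemma Ysol_symm (i j : ℕ) (hi : i ≠ 0) (hj : j ≠ 0) : Ysol j i = (Ysol i j)⁻¹ := by
  rcases lt_trichotomy i j with h | h | h
  · rw [Ysol_lt hi h, Ysol_gt hi h]
  · rw [h, Ysol_diag hj, inv_one]
  · rw [Ysol_gt hj h, Ysol_lt hj h, inv_inv]

lemma Ysol_step_i (i j : ℕ) (hi : i ≠ 0) (hj : j ≠ 0) :
    Ysol i j = ((2 * i : ℕ) : ℂ) * Ysol (i + 1) j := by
  have h2i : ((2 * i : ℕ) : ℂ) ≠ 0 := Nat.cast_ne_zero.2 (by omega)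
  have h : (Ysol (i + 1) j)⁻¹ = ((2 * i : ℕ) : ℂ) * (Ysol i j)⁻¹ := by
    rw [← Ysol_symm (i + 1) j (by omega) hj, ← Ysol_symm i j hi hj]
    exact Ysol_step_j j i hj hi
  have h2 : Ysol (i + 1) j = ((2 * i : ℕ) : ℂ)⁻¹ * Ysol i j := by
    rw [← inv_inv (Ysol (i + 1) j), h, mul_inv, inv_inv]
  rw [h2, ← mul_assoc, mul_inv_cancel₀ h2i, one_mul]

/-- For all `(i,j)` with `i, j ≥ 1` and `i + j ≤ m`, the equation
`− y_{i,j+1}/y_{i,j} − y_{i−1,j}/y_{i,j} + y_{i,j}/y_{i+1,j} + y_{i,j}/y_{i,j−1} = 0` holds,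
with the stated boundary conventions for indices `0`. -/
theorem Ysol_solves (m i j : ℕ) (hi : 1 ≤ i) (hj : 1 ≤ j) (hij : i + j ≤ m) :
    - Ysol i (j + 1) / Ysol i j - Ysol (i - 1) j / Ysol i j
      + Ysol i j / Ysol (i + 1) j + Ysol i j / Ysol i (j - 1) = 0 := by
  have hi0 : i ≠ 0 := by omega
  have hj0 : j ≠ 0 := by omega
  have hY : Ysol i j ≠ 0 := Ysol_ne i j hi0 hj0
  have T1 : Ysol i (j + 1) / Ysol i j = ((2 * j : ℕ) : ℂ) := by
    rw [Ysol_step_j i j hi0 hj0, mul_div_assoc, div_self hY, mul_one]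
  have T3 : Ysol i j / Ysol (i + 1) j = ((2 * i : ℕ) : ℂ) := by
    rw [Ysol_step_i i j hi0 hj0, mul_div_assoc,
      div_self (Ysol_ne (i + 1) j (by omega) hj0), mul_one]
  have T2 : Ysol (i - 1) j / Ysol i j = ((2 * (i - 1) : ℕ) : ℂ) := by
    rcases eq_or_ne i 1 with h1 | h1
    · subst h1; simp [Ysol]
    · have hh : (i - 1) + 1 = i := by omega
      rw [show Ysol (i - 1) j = ((2 * (i - 1) : ℕ) : ℂ) * Ysol i j by
        conv_lhs => rw [Ysol_step_i (i - 1) j (by omega) hj0, hh]]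
      rw [mul_div_assoc, div_self hY, mul_one]
  have T4 : Ysol i j / Ysol i (j - 1) = ((2 * (j - 1) : ℕ) : ℂ) := by
    rcases eq_or_ne j 1 with h1 | h1
    · subst h1; simp [Ysol]
    · have hh : (j - 1) + 1 = j := by omega
      rw [show Ysol i j = ((2 * (j - 1) : ℕ) : ℂ) * Ysol i (j - 1) by
        conv_lhs => rw [← hh, Ysol_step_j i (j - 1) hi0 (by omega)]]
      rw [mul_div_assoc, div_self (Ysol_ne i (j - 1) hi0 (by omega)), mul_one]
  rw [neg_div, T1, T2, T3, T4]
  have e1 : 2 * (i - 1) = 2 * i - 2 := by omega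
  have e2 : 2 * (j - 1) = 2 * j - 2 := by omega
  push_cast [e1, e2, Nat.cast_sub (by omega : 2 ≤ 2 * i), Nat.cast_sub (by omega : 2 ≤ 2 * j)]
  ring
end

section
/- Let (y_{i,j})_{1 ≤ i,j, i+j ≤ m+1} be a symmetric solution (y_{i,j} = y_{j,i}^{-1}) of ℓ_{(i,j)}(y) = 0 for i+j ≤ m with all y_{i,j} ≠ 0 and y_{i,i} = 1 for 2i ≤ m. Extend by defining y_{i,j} := (−1)^{i+j−m−1} y_{m+1−j, m+1−i} for (i,j) ∈ B(m) with i+j > m+1. Then the extended tuple satisfies ℓ_{(i,j)}(y) = 0 for all (i,j) ∈ B(m), is symmetric in the sense y_{i,j} y_{j,i} = 1, and satisfies y_{i,i} ∈ {1, −1} for all 1 ≤ i ≤ m. -/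
/-- Extension of a tuple `y` on `B(m)` by `0` outside; with Lean's `x / 0 = 0` convention
this encodes the boundary conventions `y_{0,•} = 0`, `y_{•,0} = ∞`, `y_{m,s} = 0` for
`s > m`, `y_{r,m} = ∞` for `r > m`. -/
noncomputable def extY (m : ℕ) (y : ℕ → ℕ → ℂ) (i j : ℕ) : ℂ :=
  if 1 ≤ i ∧ 1 ≤ j ∧ i ≤ m ∧ j ≤ m then y i j else 0

/-- `ℓ_{(i,j)}(y)` with boundary conventions. -/
noncomputable def ell (m : ℕ) (y : ℕ → ℕ → ℂ) (i j : ℕ) : ℂ :=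
  - extY m y i (j + 1) / extY m y i j - extY m y (i - 1) j / extY m y i j
    + extY m y i j / extY m y (i + 1) j + extY m y i j / extY m y i (j - 1)

lemma extY_eq (m : ℕ) (y : ℕ → ℕ → ℂ) (p q : ℕ)
    (h1 : 1 ≤ p) (h2 : 1 ≤ q) (h3 : p ≤ m) (h4 : q ≤ m) :
    extY m y p q = y p q := if_pos ⟨h1, h2, h3, h4⟩

lemma extY_zero (m : ℕ) (y : ℕ → ℕ → ℂ) (p q : ℕ)
    (h : ¬ (1 ≤ p ∧ 1 ≤ q ∧ p ≤ m ∧ q ≤ m)) :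
    extY m y p q = 0 := if_neg h

lemma negpow_div_negpow_succ (k : ℕ) (u v : ℂ) :
    ((-1:ℂ) ^ (k + 1) * u) / ((-1:ℂ) ^ k * v) = -(u / v) := by
  have h : ((-1:ℂ) ^ k) ≠ 0 := pow_ne_zero _ (by norm_num)
  rw [pow_succ, show (-1:ℂ) ^ k * -1 * u = (-1:ℂ) ^ k * (-u) from by ring,
    mul_div_mul_left _ _ h, neg_div]

lemma negpow_div_succ_negpow (k : ℕ) (u v : ℂ) :
    ((-1:ℂ) ^ k * u) / ((-1:ℂ) ^ (k + 1) * v) = -(u / v) := by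
  have h : ((-1:ℂ) ^ k) ≠ 0 := pow_ne_zero _ (by norm_num)
  rw [pow_succ, show (-1:ℂ) ^ k * -1 * v = (-1:ℂ) ^ k * (-v) from by ring,
    mul_div_mul_left _ _ h, div_neg]

/-- Given a symmetric nonvanishing solution of `ℓ_{(i,j)}(y) = 0` for `i + j ≤ m` (defined for
`i + j ≤ m + 1`, with `y_{i,i} = 1` for `2i ≤ m`), the extension
`y_{i,j} := (−1)^{i+j−m−1} y_{m+1−j,m+1−i}` for `i + j > m + 1` solves `ℓ_{(i,j)}(y) = 0` on all
of `B(m)`, is symmetric (`y_{i,j} y_{j,i} = 1`) and has `y_{i,i} ∈ {1, −1}`. -/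
theorem extend_symmetric_solution (m : ℕ) (y : ℕ → ℕ → ℂ)
    (hnz : ∀ i j, 1 ≤ i → 1 ≤ j → i + j ≤ m + 1 → y i j ≠ 0)
    (hsym : ∀ i j, 1 ≤ i → 1 ≤ j → i + j ≤ m + 1 → y i j * y j i = 1)
    (hdiag : ∀ i, 1 ≤ i → 2 * i ≤ m → y i i = 1)
    (hsol : ∀ i j, 1 ≤ i → 1 ≤ j → i + j ≤ m → ell m y i j = 0)
    (Y : ℕ → ℕ → ℂ)
    (hY : Y = fun i j =>
      if i + j ≤ m + 1 then y i j
      else (-1 : ℂ) ^ (i + j - (m + 1)) * y (m + 1 - j) (m + 1 - i)) :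
    (∀ i j, 1 ≤ i → i ≤ m → 1 ≤ j → j ≤ m → ell m Y i j = 0) ∧
    (∀ i j, 1 ≤ i → i ≤ m → 1 ≤ j → j ≤ m → Y i j * Y j i = 1) ∧
    (∀ i, 1 ≤ i → i ≤ m → Y i i = 1 ∨ Y i i = -1) := by
  -- `extY` of `Y` agrees with `extY` of `y` below the anti-diagonal
  have hEeq : ∀ p q : ℕ, p + q ≤ m + 1 → extY m Y p q = extY m y p q := by
    intro p q h
    unfold extY
    split
    · simp [hY, h]
    · rfl
  -- the key reflection formula on and above the anti-diagonal
  have key : ∀ p q : ℕ, 1 ≤ p → 1 ≤ q → m + 1 ≤ p + q →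
      extY m Y p q = (-1:ℂ) ^ (p + q - (m + 1)) * extY m y (m + 1 - q) (m + 1 - p) := by
    intro p q hp hq hpq
    by_cases hpm : p ≤ m
    · by_cases hqm : q ≤ m
      · rw [extY_eq _ _ _ _ hp hq hpm hqm,
          extY_eq _ _ _ _ (by omega) (by omega) (by omega) (by omega)]
        simp only [hY]
        by_cases h1 : p + q ≤ m + 1
        · rw [if_pos h1, show m + 1 - q = p from by omega, show m + 1 - p = q from by omega,
            show p + q - (m + 1) = 0 from by omega, pow_zero, one_mul]
        · rw [if_neg h1]
      · rw [extY_zero _ _ _ _ (by omega), extY_zero _ _ _ _ (by omega), mul_zero]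
    · rw [extY_zero _ _ _ _ (by omega), extY_zero _ _ _ _ (by omega), mul_zero]
  refine ⟨?_, ?_, ?_⟩
  · -- the ℓ-equations
    intro i j hi him hj hjm
    by_cases h1 : i + j ≤ m
    · -- below the anti-diagonal : all entries agree with `y`
      have h0 := hsol i j hi hj h1
      unfold ell at h0 ⊢
      rw [hEeq i (j + 1) (by omega), hEeq (i - 1) j (by omega), hEeq i j (by omega),
        hEeq (i + 1) j (by omega), hEeq i (j - 1) (by omega)]
      exact h0
    · by_cases h2 : i + j = m + 1
      · -- on the anti-diagonal : terms cancel in pairs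
        have e1 : extY m Y i (j + 1) = -(extY m y (i - 1) j) := by
          by_cases hj' : j = m
          · have hi1 : i = 1 := by omega
            subst hj' hi1
            rw [extY_zero _ _ _ _ (by omega), extY_zero _ _ _ _ (by omega), neg_zero]
          · rw [key i (j + 1) hi (by omega) (by omega),
              show i + (j + 1) - (m + 1) = 1 from by omega, pow_one,
              show m + 1 - (j + 1) = i - 1 from by omega,
              show m + 1 - i = j from by omega,
              extY_eq _ _ _ _ (by omega) (by omega) (by omega) (by omega)]
            ring
        have e3 : extY m Y (i + 1) j = -(extY m y i (j - 1)) := by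
          by_cases hi' : i = m
          · have hj1 : j = 1 := by omega
            subst hi' hj1
            rw [extY_zero _ _ _ _ (by omega), extY_zero _ _ _ _ (by omega), neg_zero]
          · rw [key (i + 1) j (by omega) hj (by omega),
              show i + 1 + j - (m + 1) = 1 from by omega, pow_one,
              show m + 1 - j = i from by omega,
              show m + 1 - (i + 1) = j - 1 from by omega,
              extY_eq _ _ _ _ (by omega) (by omega) (by omega) (by omega)]
            ring
        unfold ell
        rw [e1, hEeq (i - 1) j (by omega), e3, hEeq i (j - 1) (by omega), div_neg]
        ring
      · -- above the anti-diagonal : reflect to `(m+1-j, m+1-i)`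
        have hij : m + 2 ≤ i + j := by omega
        have hi2 : 2 ≤ i := by omega
        have hj2 : 2 ≤ j := by omega
        set k := i + j - (m + 2) with hk
        have e0 : extY m Y i j = (-1:ℂ) ^ (k + 1) * extY m y (m + 1 - j) (m + 1 - i) := by
          rw [key i j hi hj (by omega), show i + j - (m + 1) = k + 1 from by omega]
        have e1 : extY m Y i (j + 1)
            = (-1:ℂ) ^ (k + 1 + 1) * extY m y (m + 1 - j - 1) (m + 1 - i) := by
          rw [key i (j + 1) hi (by omega) (by omega),
            show i + (j + 1) - (m + 1) = k + 1 + 1 from by omega,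
            show m + 1 - (j + 1) = m + 1 - j - 1 from by omega]
        have e2 : extY m Y (i - 1) j
            = (-1:ℂ) ^ k * extY m y (m + 1 - j) (m + 1 - i + 1) := by
          rw [key (i - 1) j (by omega) hj (by omega),
            show i - 1 + j - (m + 1) = k from by omega,
            show m + 1 - (i - 1) = m + 1 - i + 1 from by omega]
        have e3 : extY m Y (i + 1) j
            = (-1:ℂ) ^ (k + 1 + 1) * extY m y (m + 1 - j) (m + 1 - i - 1) := by
          rw [key (i + 1) j (by omega) hj (by omega),
            show i + 1 + j - (m + 1) = k + 1 + 1 from by omega,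
            show m + 1 - (i + 1) = m + 1 - i - 1 from by omega]
        have e4 : extY m Y i (j - 1)
            = (-1:ℂ) ^ k * extY m y (m + 1 - j + 1) (m + 1 - i) := by
          rw [key i (j - 1) hi (by omega) (by omega),
            show i + (j - 1) - (m + 1) = k from by omega,
            show m + 1 - (j - 1) = m + 1 - j + 1 from by omega]
        have h0 := hsol (m + 1 - j) (m + 1 - i) (by omega) (by omega) (by omega)
        unfold ell at h0 ⊢
        rw [e0, e1, e2, e3, e4, neg_div,
          negpow_div_negpow_succ (k + 1), negpow_div_succ_negpow k,
          negpow_div_succ_negpow (k + 1), negpow_div_negpow_succ k]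
        linear_combination -h0
  · -- symmetry
    intro i j hi him hj hjm
    by_cases h1 : i + j ≤ m + 1
    · simp only [hY]
      rw [if_pos h1, if_pos (show j + i ≤ m + 1 from by omega)]
      exact hsym i j hi hj h1
    · simp only [hY]
      rw [if_neg h1, if_neg (show ¬ j + i ≤ m + 1 from by omega),
        show j + i - (m + 1) = i + j - (m + 1) from by omega]
      have hs := hsym (m + 1 - j) (m + 1 - i) (by omega) (by omega) (by omega)
      have hsq : ((-1:ℂ) ^ (i + j - (m + 1))) ^ 2 = 1 := by
        rw [← pow_mul, mul_comm, pow_mul, neg_one_sq, one_pow]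
      calc (-1:ℂ) ^ (i + j - (m + 1)) * y (m + 1 - j) (m + 1 - i) *
            ((-1:ℂ) ^ (i + j - (m + 1)) * y (m + 1 - i) (m + 1 - j))
          = ((-1:ℂ) ^ (i + j - (m + 1))) ^ 2 *
            (y (m + 1 - j) (m + 1 - i) * y (m + 1 - i) (m + 1 - j)) := by ring
        _ = 1 := by rw [hs, mul_one, hsq]
  · -- diagonal values
    intro i hi him
    by_cases h1 : i + i ≤ m
    · left
      simp only [hY]
      rw [if_pos (show i + i ≤ m + 1 from by omega)]
      exact hdiag i hi (by omega)
    · by_cases h2 : i + i ≤ m + 1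
      · simp only [hY]
        rw [if_pos h2]
        exact mul_self_eq_one_iff.mp (hsym i i hi hi h2)
      · simp only [hY]
        rw [if_neg h2, hdiag (m + 1 - i) (by omega) (by omega), mul_one]
        rcases Nat.even_or_odd (i + i - (m + 1)) with he | ho
        · left; exact he.neg_one_pow
        · right; exact ho.neg_one_pow
end

section
/- For every nonzero complex number c, there exists a tuple (y_{i,j})_{(i,j)∈B(m)} of nonzero complex numbers solving ℓ_{(i,j)}(y) = 0 for all (i,j) ∈ B(m), such that y_{i,j} · y_{j,i} = c² for all i,j, y_{m,m} = c, and y_{i,i} = ±c for all 1 ≤ i < m. -/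
open scoped Nat

noncomputable def rightRatio (m : ℕ) (y : ℕ → ℕ → ℂ) (i j : ℕ) : ℂ :=
  extY m y i (j + 1) / extY m y i j

section

variable {m : ℕ} {y : ℕ → ℕ → ℂ} {K : ℂ}

theorem extY_of_mem {i j : ℕ} (hi : 1 ≤ i) (him : i ≤ m) (hj : 1 ≤ j)
    (hjm : j ≤ m) : extY m y i j = y i j :=
  if_pos ⟨hi, hj, him, hjm⟩

-- Outside `B(m)` both sides vanish by the convention `x / 0 = 0`.
theorem extY_div_extY_eq_swap (hK : K ≠ 0)
    (hy : ∀ i j, 1 ≤ i → i ≤ m → 1 ≤ j → j ≤ m → y i j * y j i = K) (a b j : ℕ) :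
    extY m y a j / extY m y b j = extY m y j b / extY m y j a := by
  by_cases haj : 1 ≤ a ∧ a ≤ m ∧ 1 ≤ j ∧ j ≤ m
  · by_cases hbj : 1 ≤ b ∧ b ≤ m ∧ 1 ≤ j ∧ j ≤ m
    · simp only [extY, if_pos (show 1 ≤ a ∧ 1 ≤ j ∧ a ≤ m ∧ j ≤ m by omega),
        if_pos (show 1 ≤ b ∧ 1 ≤ j ∧ b ≤ m ∧ j ≤ m by omega),
        if_pos (show 1 ≤ j ∧ 1 ≤ a ∧ j ≤ m ∧ a ≤ m by omega),
        if_pos (show 1 ≤ j ∧ 1 ≤ b ∧ j ≤ m ∧ b ≤ m by omega)]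
      have hyaj := hy a j haj.1 haj.2.1 haj.2.2.1 haj.2.2.2
      have hybj := hy b j hbj.1 hbj.2.1 hbj.2.2.1 hbj.2.2.2
      rw [div_eq_div_iff (left_ne_zero_of_mul (hybj ▸ hK)) (right_ne_zero_of_mul (hyaj ▸ hK)),
        hyaj, mul_comm, hybj]
    · have hbj' : extY m y b j = 0 := if_neg (by omega)
      have hjb' : extY m y j b = 0 := if_neg (by omega)
      rw [hbj', hjb', div_zero, zero_div]
  · have haj' : extY m y a j = 0 := if_neg (by omega)
    have hja' : extY m y j a = 0 := if_neg (by omega)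
    rw [haj', hja', div_zero, zero_div]

theorem ell_eq_rightRatio (hK : K ≠ 0)
    (hy : ∀ i j, 1 ≤ i → i ≤ m → 1 ≤ j → j ≤ m → y i j * y j i = K) {i j : ℕ} (hi : 1 ≤ i)
    (hj : 1 ≤ j) :
    ell m y i j = rightRatio m y i (j - 1) - rightRatio m y i j
      + rightRatio m y j i - rightRatio m y j (i - 1) := by
  unfold ell rightRatio
  rw [extY_div_extY_eq_swap hK hy (i - 1) i j, extY_div_extY_eq_swap hK hy i (i + 1) j,
    Nat.sub_add_cancel hi, Nat.sub_add_cancel hj]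
  ring

end

noncomputable def symmetricSolution (m : ℕ) (c : ℂ) (i j : ℕ) : ℂ :=
  if i + j ≤ m then (-1) ^ (m + 1) * c * (j - 1)! / (i - 1)!
  else (-1) ^ (i + j) * c * (m - i)! / (m - j)!

noncomputable def symmetricSolutionRatio (m i j : ℕ) : ℂ :=
  j - if m < i + j then (m : ℂ) else 0

section

variable {m : ℕ} {c : ℂ}

private theorem cast_factorial_ne_zero (n : ℕ) : (n ! : ℂ) ≠ 0 :=
  Nat.cast_ne_zero.mpr n.factorial_ne_zero

theorem symmetricSolution_ne_zero (hc : c ≠ 0) (i j : ℕ) : symmetricSolution m c i j ≠ 0 := by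
  unfold symmetricSolution
  split_ifs <;> simp [hc, Nat.factorial_ne_zero]

theorem symmetricSolution_mul_swap (i j : ℕ) :
    symmetricSolution m c i j * symmetricSolution m c j i = c ^ 2 := by
  have hsign (n : ℕ) : ((-1 : ℂ) ^ n) ^ 2 = 1 := by rw [← pow_mul, pow_mul', neg_one_sq, one_pow]
  unfold symmetricSolution
  by_cases h : i + j ≤ m
  · rw [if_pos h, if_pos (by omega)]
    have := cast_factorial_ne_zero (i - 1); have := cast_factorial_ne_zero (j - 1)
    field_simp
    linear_combination c ^ 2 * hsign (m + 1)
  · rw [if_neg h, if_neg (by omega), add_comm j i]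
    have := cast_factorial_ne_zero (m - i); have := cast_factorial_ne_zero (m - j)
    field_simp
    linear_combination c ^ 2 * hsign (i + j)

theorem symmetricSolution_self_eq_or (i : ℕ) :
    symmetricSolution m c i i = c ∨ symmetricSolution m c i i = -c := by
  unfold symmetricSolution
  split_ifs
  · rw [mul_div_cancel_right₀ _ (cast_factorial_ne_zero _)]
    rcases neg_one_pow_eq_or ℂ (m + 1) with h | h <;> simp [h]
  · rw [mul_div_cancel_right₀ _ (cast_factorial_ne_zero _)]
    simp [← two_mul, pow_mul]

theorem symmetricSolution_self_of_pos (hm : 0 < m) : symmetricSolution m c m m = c := by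
  unfold symmetricSolution
  rw [if_neg (by omega), Nat.sub_self]
  simp [← two_mul, pow_mul]

theorem symmetricSolution_succ_right {i j : ℕ} (hj : 1 ≤ j) (hjm : j < m) :
    symmetricSolution m c i (j + 1) =
      symmetricSolutionRatio m i j * symmetricSolution m c i j := by
  obtain ⟨k, rfl⟩ : ∃ k, m = j + 1 + k := ⟨m - (j + 1), by omega⟩
  obtain ⟨b, rfl⟩ : ∃ b, j = b + 1 := ⟨j - 1, by omega⟩
  unfold symmetricSolution symmetricSolutionRatio
  rcases lt_trichotomy (i + (b + 1)) (b + 1 + 1 + k) with h | h | h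
  · rw [if_pos (show i + (b + 1 + 1) ≤ b + 1 + 1 + k by omega),
      if_pos (show i + (b + 1) ≤ b + 1 + 1 + k by omega),
      if_neg (show ¬ b + 1 + 1 + k < i + (b + 1) by omega)]
    simp only [Nat.add_sub_cancel, Nat.factorial_succ]
    push_cast
    ring
  · obtain rfl : i = k + 1 := by omega
    rw [if_neg (show ¬ k + 1 + (b + 1 + 1) ≤ b + 1 + 1 + k by omega),
      if_pos (show k + 1 + (b + 1) ≤ b + 1 + 1 + k by omega),
      if_neg (show ¬ b + 1 + 1 + k < k + 1 + (b + 1) by omega),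
      show b + 1 + 1 + k - (k + 1) = b + 1 by omega, show b + 1 + 1 + k - (b + 1 + 1) = k by omega]
    simp only [Nat.add_sub_cancel, Nat.factorial_succ]
    push_cast
    ring
  · rw [if_neg (show ¬ i + (b + 1 + 1) ≤ b + 1 + 1 + k by omega),
      if_neg (show ¬ i + (b + 1) ≤ b + 1 + 1 + k by omega),
      if_pos (show b + 1 + 1 + k < i + (b + 1) by omega),
      show b + 1 + 1 + k - (b + 1 + 1) = k by omega, show b + 1 + 1 + k - (b + 1) = k + 1 by omega,
      Nat.factorial_succ]
    have := cast_factorial_ne_zero k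
    push_cast
    field_simp
    ring

theorem rightRatio_symmetricSolution (hc : c ≠ 0) {i j : ℕ} (hi : 1 ≤ i) (him : i ≤ m)
    (hjm : j ≤ m) : rightRatio m (symmetricSolution m c) i j = symmetricSolutionRatio m i j := by
  unfold rightRatio
  rcases Nat.eq_zero_or_pos j with rfl | hj
  · rw [show extY m (symmetricSolution m c) i 0 = 0 from if_neg (by omega), div_zero]
    simp [symmetricSolutionRatio, him.not_gt]
  rcases hjm.eq_or_lt with hjm | hjm
  · subst j
    rw [show extY m (symmetricSolution m c) i (m + 1) = 0 from if_neg (by omega), zero_div]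
    simp [symmetricSolutionRatio, show m < i + m by omega]
  rw [extY_of_mem hi him (by omega) hjm, extY_of_mem hi him hj hjm.le,
    symmetricSolution_succ_right hj hjm, mul_div_cancel_right₀ _ (symmetricSolution_ne_zero hc i j)]

theorem ell_symmetricSolution (hc : c ≠ 0) {i j : ℕ} (hi : 1 ≤ i) (him : i ≤ m) (hj : 1 ≤ j)
    (hjm : j ≤ m) : ell m (symmetricSolution m c) i j = 0 := by
  rw [ell_eq_rightRatio (pow_ne_zero 2 hc) (fun i j _ _ _ _ => symmetricSolution_mul_swap i j)
      hi hj,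
    rightRatio_symmetricSolution hc hi him (by omega), rightRatio_symmetricSolution hc hi him hjm,
    rightRatio_symmetricSolution hc hj hjm him, rightRatio_symmetricSolution hc hj hjm (by omega)]
  obtain ⟨a, rfl⟩ : ∃ a, i = a + 1 := ⟨i - 1, by omega⟩
  obtain ⟨b, rfl⟩ : ∃ b, j = b + 1 := ⟨j - 1, by omega⟩
  simp only [symmetricSolutionRatio, Nat.add_sub_cancel]
  split_ifs <;> first | omega | (push_cast; ring)

end

/-- For every nonzero complex number `c`, there exists a tuple of nonzero complex numbers
solving `ℓ_{(i,j)}(y) = 0` on `B(m)`, with `y_{i,j}·y_{j,i} = c²`, `y_{m,m} = c` and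
`y_{i,i} = ±c` for `1 ≤ i < m`. -/
theorem exists_symmetric_solution (m : ℕ) (hm : 2 ≤ m) (c : ℂ) (hc : c ≠ 0) :
    ∃ y : ℕ → ℕ → ℂ,
      (∀ i j, 1 ≤ i → i ≤ m → 1 ≤ j → j ≤ m → y i j ≠ 0) ∧
      (∀ i j, 1 ≤ i → i ≤ m → 1 ≤ j → j ≤ m → ell m y i j = 0) ∧
      (∀ i j, 1 ≤ i → i ≤ m → 1 ≤ j → j ≤ m → y i j * y j i = c ^ 2) ∧
      y m m = c ∧
      (∀ i, 1 ≤ i → i < m → y i i = c ∨ y i i = -c) :=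
  ⟨symmetricSolution m c, fun i j _ _ _ _ => symmetricSolution_ne_zero hc i j,
    fun _ _ hi him hj hjm => ell_symmetricSolution hc hi him hj hjm,
    fun i j _ _ _ _ => symmetricSolution_mul_swap i j, symmetricSolution_self_of_pos (by omega),
    fun i _ _ => symmetricSolution_self_eq_or i⟩
end

section
/- Consider the Laurent polynomial W(y₁,y₂,y₃) = (y₂/y₁ + y₁/y₃ + y₂ + 1/y₃)·T^{1−t} + ((1+T^{2t})·y₂/y₁ + (1+T^{2t})/y₃ + 1/y₂ + c·y₃)·T^{1+t} over the Novikov field Λ, where 0 ≤ t < 1, for appropriate choices of coefficients. Then the point y₂ = y₃ = 1, y₁ = the square root of 1 + T^{2t} in Λ_U with leading coefficient −1, satisfies y₁ ∂W/∂y₁ = 0. -/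
/-! On `y₂ = y₃ = 1` the equation `y₁ ∂W/∂y₁ = 0` becomes, after multiplying by `y₁`,
`(y₁² - 1) T^{1-t} = T^{1+t}`; since `y₁² - 1 = T^{2t}` and `T^{2t} T^{1-t} = T^{1+t}`,
this holds. -/

/-- The Novikov field over `ℂ`, modeled as Hahn series with real exponents;
`T^a` is `HahnSeries.single a 1`. -/
noncomputable abbrev Nov : Type := HahnSeries ℝ ℂ

theorem neg_inv_add_mul_add_neg_inv_mul_eq_zero {K : Type*} [Field K] {y u v w : K}
    (hy : y ≠ 0) (hsq : y ^ 2 = 1 + u) (huv : u * v = w) :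
    (-(1 / y) + y) * v + -(1 / y) * w = 0 := by
  field_simp
  linear_combination v * hsq + huv

theorem critical_point_y11_general (t : ℝ)
    (y₁ y₂ y₃ : Nov) (hy₁0 : y₁ ≠ 0)
    (hsq : y₁ ^ 2 = 1 + HahnSeries.single (2 * t) (1 : ℂ))
    (hy₂ : y₂ = 1) (hy₃ : y₃ = 1) :
    (- (y₂ / y₁) + y₁ / y₃) * HahnSeries.single (1 - t) (1 : ℂ)
      + (- (y₂ / y₁)) * HahnSeries.single (1 + t) (1 : ℂ) = 0 := by
  subst hy₂ hy₃
  have hexp : (HahnSeries.single (2 * t) (1 : ℂ) : Nov) * HahnSeries.single (1 - t) 1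
      = HahnSeries.single (1 + t) 1 := by
    rw [HahnSeries.single_mul_single, one_mul]
    ring_nf
  simpa only [div_one] using neg_inv_add_mul_add_neg_inv_mul_eq_zero hy₁0 hsq hexp

/-- For the bulk-deformed potential of the Lagrangian torus `L(t)` in `Fl(3)` whose
logarithmic derivative in `y₁` is `(−y₂/y₁ + y₁/y₃)T^{1−t} + (−y₂/y₁)T^{1+t}`, the point
`y₂ = y₃ = 1` and `y₁` the square root of `1 + T^{2t}` in `Λ_U` with leading coefficient `−1`
satisfies `y₁ ∂W/∂y₁ = 0`. -/
theorem critical_point_y11 (t : ℝ) (ht0 : 0 ≤ t) (ht1 : t < 1)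
    (y₁ y₂ y₃ : Nov) (hy₁0 : y₁ ≠ 0) (hord : y₁.order = 0) (hlead : y₁.coeff 0 = -1)
    (hsq : y₁ ^ 2 = 1 + HahnSeries.single (2 * t) (1 : ℂ))
    (hy₂ : y₂ = 1) (hy₃ : y₃ = 1) :
    (- (y₂ / y₁) + y₁ / y₃) * HahnSeries.single (1 - t) (1 : ℂ)
      + (- (y₂ / y₁)) * HahnSeries.single (1 + t) (1 : ℂ) = 0 :=
  critical_point_y11_general t y₁ y₂ y₃ hy₁0 hsq hy₂ hy₃
end

section
/- Let W(y₁,y₂,y₃) = (y₂/y₁ + y₁/y₃ + y₂ + 1/y₃)·T^{1−t} + (1/y₂ + y₃)·T^{1+t} be the potential function of the Lagrangian torus L(t) in Fl(3) as a Laurent polynomial over the Novikov field, 0 < t < 1. Then W has no critical point (y₁,y₂,y₃) ∈ (Λ_U)³: the system y_k ∂W/∂y_k = 0 (k = 1,2,3) has no solution with all y_k of valuation zero. -/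
/-- `Λ_U`: elements of valuation zero. -/
def NovU : Set Nov := {x | x ≠ 0 ∧ x.order = 0}

/-- The undeformed potential
`W = (y₂/y₁ + y₁/y₃ + y₂ + 1/y₃)T^{1−t} + (1/y₂ + y₃)T^{1+t}` of `L(t)` in `Fl(3)` for
`0 < t < 1` has no critical point with all coordinates in `Λ_U`: the system
`y_k ∂W/∂y_k = 0` (`k = 1,2,3`), i.e.
`(−y₂/y₁ + y₁/y₃)T^{1−t} = 0`,
`(y₂/y₁ + y₂)T^{1−t} − (1/y₂)T^{1+t} = 0`,
`(−y₁/y₃ − 1/y₃)T^{1−t} + y₃T^{1+t} = 0`,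
has no solution with all `y_k` of valuation zero. -/
theorem no_critical_point_undeformed (t : ℝ) (ht0 : 0 < t) (ht1 : t < 1) :
    ¬ ∃ y₁ y₂ y₃ : Nov, y₁ ∈ NovU ∧ y₂ ∈ NovU ∧ y₃ ∈ NovU ∧
      (- (y₂ / y₁) + y₁ / y₃) * HahnSeries.single (1 - t) (1 : ℂ) = 0 ∧
      (y₂ / y₁ + y₂) * HahnSeries.single (1 - t) (1 : ℂ)
        - (1 / y₂) * HahnSeries.single (1 + t) (1 : ℂ) = 0 ∧
      (- (y₁ / y₃) - 1 / y₃) * HahnSeries.single (1 - t) (1 : ℂ)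
        + y₃ * HahnSeries.single (1 + t) (1 : ℂ) = 0 := by
  rintro ⟨y₁, y₂, y₃, ⟨hy₁, ho₁⟩, ⟨hy₂, ho₂⟩, ⟨hy₃, ho₃⟩, e1, e2, e3⟩
  set s : Nov := HahnSeries.single (1 - t) (1 : ℂ) with hs
  set u : Nov := HahnSeries.single (1 + t) (1 : ℂ) with hu
  have hsne : s ≠ 0 := HahnSeries.single_ne_zero one_ne_zero
  have hune : u ≠ 0 := HahnSeries.single_ne_zero one_ne_zero
  -- equation 1: y₂ y₃ = y₁²
  have e1' := (mul_eq_zero.mp e1).resolve_right hsne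
  have hA : y₂ * y₃ = y₁ ^ 2 := by
    have h : y₂ / y₁ = y₁ / y₃ := by linear_combination -e1'
    rw [div_eq_div_iff hy₁ hy₃] at h
    linear_combination h
  -- equations 2, 3 rewritten
  have h2 : (y₂ / y₁ + y₂) * s = (1 / y₂) * u := sub_eq_zero.mp e2
  have h3 : (y₁ / y₃ + 1 / y₃) * s = y₃ * u := by linear_combination -e3
  have h2' : y₂ ^ 2 * (1 + y₁) * s = y₁ * u := by
    field_simp [hy₁, hy₂] at h2
    linear_combination h2
  have h3' : (1 + y₁) * s = y₃ ^ 2 * u := by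
    field_simp [hy₃] at h3
    linear_combination h3
  have h1p : (1 : Nov) + y₁ ≠ 0 := by
    intro h
    rw [h, mul_zero, zero_mul] at h2'
    exact mul_ne_zero hy₁ hune h2'.symm
  -- y₂² y₃² = y₁, hence y₁³ = 1
  have hkey : y₂ ^ 2 * y₃ ^ 2 = y₁ := by
    have h0 : (y₂ ^ 2 * y₃ ^ 2 - y₁) * u = 0 := by
      linear_combination h2' - y₂ ^ 2 * h3'
    exact sub_eq_zero.mp ((mul_eq_zero.mp h0).resolve_right hune)
  have hcube : y₁ ^ 3 = 1 := by
    have h4 : y₁ * y₁ ^ 3 = y₁ * 1 := by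
      linear_combination hkey - (y₂ * y₃ + y₁ ^ 2) * hA
    exact mul_left_cancel₀ hy₁ h4
  -- leading coefficient of y₁ cubes to 1
  set c : ℂ := y₁.coeff 0 with hc
  have hlc : y₁.leadingCoeff = c := by rw [HahnSeries.leadingCoeff_eq, ho₁]
  have hy11 : y₁ * y₁ ≠ 0 := mul_ne_zero hy₁ hy₁
  have ho11 : (y₁ * y₁).order = 0 := by
    rw [HahnSeries.order_mul hy₁ hy₁, ho₁, add_zero]
  have hc2 : (y₁ * y₁).leadingCoeff = c * c := by
    rw [HahnSeries.leadingCoeff_eq, ho11]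
    have := HahnSeries.coeff_mul_order_add_order y₁ y₁
    rw [ho₁, add_zero, hlc] at this
    exact this
  have hc3 : c ^ 3 = 1 := by
    have h1 : (y₁ * y₁ * y₁).coeff 0 = c * c * c := by
      have := HahnSeries.coeff_mul_order_add_order (y₁ * y₁) y₁
      rw [ho11, ho₁, add_zero, hlc, hc2] at this
      exact this
    have h2 : y₁ * y₁ * y₁ = 1 := by linear_combination hcube
    rw [h2] at h1
    simp [HahnSeries.coeff_one] at h1
    linear_combination -h1
  -- order of 1 + y₁ is 2t > 0, hence its coeff at 0 vanishes, so c = -1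
  have h1pord : (0 : ℝ) < ((1 : Nov) + y₁).order := by
    have hL : (((1 : Nov) + y₁) * s).order = ((1 : Nov) + y₁).order + (1 - t) := by
      rw [HahnSeries.order_mul h1p hsne, HahnSeries.order_single one_ne_zero]
    have hR : (y₃ ^ 2 * u).order = 1 + t := by
      rw [HahnSeries.order_mul (pow_ne_zero 2 hy₃) hune,
        HahnSeries.order_pow, ho₃, HahnSeries.order_single one_ne_zero]
      simp
    rw [h3', hR] at hL
    linarith
  have hcoeff0 : ((1 : Nov) + y₁).coeff 0 = 0 :=
    HahnSeries.coeff_eq_zero_of_lt_order h1pord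
  have hcm1 : c = -1 := by
    rw [HahnSeries.coeff_add, HahnSeries.coeff_one] at hcoeff0
    simp at hcoeff0
    linear_combination hcoeff0
  rw [hcm1] at hc3
  norm_num at hc3
end
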